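/- Every 2-block diagonal matching field BΛ_a of size 3×n is coherent: there exists a weight matrix M ∈ R^{3×n} such that for every 3-subset I ⊆ [n], the initial form in_M(det X_I) equals sgn(BΛ_a(I))·x_{BΛ_a(I)}, i.e., the unique lowest-M-weight term of det(X_I) is the term prescribed by BΛ_a. -/

import Mathlib

open MvPolynomial

open MvPolynomial

/-- The set of `k`-element subsets of `[n]`, indexing the Plücker variables `P_I`. -/
abbrev PV (k n : ℕ) := {I : Finset (Fin n) // I.card = k}

/-- The `r`-th smallest element of the `k`-subset `I`. -/
noncomputable def elt {k n : ℕ} (I : PV k n) (r : Fin k) : Fin n :=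
  (I.1.orderIsoOfFin I.2 r : Fin n)

lemma elt_mem {k n : ℕ} (I : PV k n) (r : Fin k) : elt I r ∈ I.1 :=
  (I.1.orderIsoOfFin I.2 r).2

/-- A `k × n` matching field: a choice of a permutation in `S_k` for each `k`-subset of `[n]`. -/
abbrev MatchingField (k n : ℕ) := PV k n → Equiv.Perm (Fin k)

/-- The monomial `x_{Λ(I)} = x_{σ(1) i₁} ⋯ x_{σ(k) i_k}` where `σ = Λ(I)`. -/
noncomputable def mfMon (K : Type) [Field K] {k n : ℕ} (Λ : MatchingField k n) (I : PV k n) :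
    MvPolynomial (Fin k × Fin n) K :=
  ∏ r : Fin k, X (Λ I r, elt I r)

/-- The term `sgn(Λ(I)) ⬝ x_{Λ(I)}`. -/
noncomputable def mfTerm (K : Type) [Field K] {k n : ℕ} (Λ : MatchingField k n) (I : PV k n) :
    MvPolynomial (Fin k × Fin n) K :=
  ((Equiv.Perm.sign (Λ I) : ℤ) : MvPolynomial (Fin k × Fin n) K) * mfMon K Λ I

/-- The monomial map `φ_Λ : K[P_I] → K[x_{ij}]`, `P_I ↦ sgn(Λ(I)) x_{Λ(I)}`. -/
noncomputable def mfMap (K : Type) [Field K] {k n : ℕ} (Λ : MatchingField k n) :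
    MvPolynomial (PV k n) K →ₐ[K] MvPolynomial (Fin k × Fin n) K :=
  aeval (mfTerm K Λ)

/-- The matching field ideal `I_Λ = ker φ_Λ`. -/
noncomputable def mfIdeal (K : Type) [Field K] {k n : ℕ} (Λ : MatchingField k n) :
    Ideal (MvPolynomial (PV k n) K) :=
  RingHom.ker (mfMap K Λ).toRingHom

/-- The Plücker form `det X_I`, the maximal minor of the `k × n` matrix of variables on
columns `I`. -/
noncomputable def pluckerForm (K : Type) [Field K] {k n : ℕ} (I : PV k n) :
    MvPolynomial (Fin k × Fin n) K :=
  Matrix.det (Matrix.of fun r c : Fin k => (X (r, elt I c) : MvPolynomial (Fin k × Fin n) K))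

/-- The map `K[P_I] → K[x_{ij}]`, `P_I ↦ det X_I`. -/
noncomputable def pluckerMap (K : Type) [Field K] (k n : ℕ) :
    MvPolynomial (PV k n) K →ₐ[K] MvPolynomial (Fin k × Fin n) K :=
  aeval (pluckerForm K)

/-- The Plücker ideal `I_{k,n}`, the kernel of `P_I ↦ det X_I`. -/
noncomputable def pluckerIdeal (K : Type) [Field K] (k n : ℕ) :
    Ideal (MvPolynomial (PV k n) K) :=
  RingHom.ker (pluckerMap K k n).toRingHom

/-- The weight of an exponent vector with respect to a weight `w` on the variables. -/
noncomputable def expWt {σ : Type*} (w : σ → ℝ) (m : σ →₀ ℕ) : ℝ :=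
  m.sum fun s e => (e : ℝ) * w s

open Classical in
/-- The initial form `in_w(f)`: the sum of all terms of `f` of lowest `w`-weight. -/
noncomputable def initialForm {σ : Type*} {R : Type*} [CommRing R] (w : σ → ℝ)
    (f : MvPolynomial σ R) : MvPolynomial σ R :=
  ∑ m ∈ f.support.filter (fun m => ∀ m' ∈ f.support, expWt w m ≤ expWt w m'),
    monomial m (f.coeff m)

/-- The initial ideal `in_w(I)`: the ideal generated by the initial forms of all elements. -/
noncomputable def initialIdeal {σ : Type*} {R : Type*} [CommRing R] (w : σ → ℝ)
    (I : Ideal (MvPolynomial σ R)) : Ideal (MvPolynomial σ R) :=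
  Ideal.span {g | ∃ f ∈ I, g = initialForm w f}

/-- The weight matrix `M` induces the matching field `Λ` (so `Λ` is coherent): for every `I`
the initial form of the Plücker form `det X_I` is the single term `sgn(Λ(I)) x_{Λ(I)}`. -/
def Induces (K : Type) [Field K] {k n : ℕ} (M : Fin k → Fin n → ℝ)
    (Λ : MatchingField k n) : Prop :=
  ∀ I : PV k n, initialForm (fun p => M p.1 p.2) (pluckerForm K I) = mfTerm K Λ I

/-- The induced weight `w_M` on the Plücker variables: `w_M(P_I)` is the `M`-weight of
`x_{Λ(I)}`. -/
noncomputable def wM {k n : ℕ} (M : Fin k → Fin n → ℝ) (Λ : MatchingField k n) :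
    PV k n → ℝ :=
  fun I => ∑ r : Fin k, M (Λ I r) (elt I r)

/-- An ideal is quadratically generated if it is generated by its homogeneous elements of
degree `2`. -/
def QuadGen {σ R : Type*} [CommRing R] (I : Ideal (MvPolynomial σ R)) : Prop :=
  I = Ideal.span {f | f ∈ I ∧ MvPolynomial.IsHomogeneous f 2}

/-- The `2`-block diagonal matching field `BΛ_a` of size `3 × n` with first block
`I₁ = {1, …, a₁}` (zero-indexed: `{j : j < a₁}`): it assigns the transposition `(12)` to `I`
when `|I ∩ I₁| = 1` and the identity otherwise. -/
noncomputable def twoBlockMF (a1 : ℕ) (n : ℕ) : MatchingField 3 n :=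
  fun I => if (I.1.filter (fun j : Fin n => (j : ℕ) < a1)).card = 1 then Equiv.swap 0 1 else 1

namespace TwoBlockAux

variable {K : Type} [Field K] {n : ℕ}

lemma elt_strictMono (I : PV 3 n) : StrictMono (elt I) := fun _ _ h =>
  Subtype.coe_lt_coe.mpr ((I.1.orderIsoOfFin I.2).strictMono h)

lemma elt_injective (I : PV 3 n) : Function.Injective (elt I) :=
  (elt_strictMono I).injective

/-- exponent vector of the term of `det X_I` corresponding to `σ`. -/
noncomputable def expv (I : PV 3 n) (σ : Equiv.Perm (Fin 3)) : (Fin 3 × Fin n) →₀ ℕ :=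
  ∑ r : Fin 3, Finsupp.single (σ r, elt I r) 1

lemma expv_apply (I : PV 3 n) (σ τ : Equiv.Perm (Fin 3)) (r : Fin 3) :
    expv I σ (τ r, elt I r) = if σ r = τ r then 1 else 0 := by
  rw [expv, Finsupp.finset_sum_apply, Finset.sum_eq_single r]
  · rw [Finsupp.single_apply]
    by_cases h : σ r = τ r
    · rw [if_pos h, if_pos (by rw [h])]
    · rw [if_neg h, if_neg (fun hh => h (congrArg Prod.fst hh))]
  · intro b _ hb
    rw [Finsupp.single_apply, if_neg]
    intro hh
    exact hb (elt_injective I (congrArg Prod.snd hh))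
  · simp

lemma expv_injective (I : PV 3 n) : Function.Injective (expv I) := by
  intro σ τ h
  ext r
  have h1 : expv I σ (σ r, elt I r) = expv I τ (σ r, elt I r) := by rw [h]
  rw [expv_apply I σ σ r, expv_apply I τ σ r, if_pos rfl] at h1
  by_cases hc : τ r = σ r
  · exact congrArg Fin.val hc.symm
  · rw [if_neg hc] at h1; exact absurd h1 one_ne_zero

lemma prod_X_eq (I : PV 3 n) (σ : Equiv.Perm (Fin 3)) :
    (∏ r : Fin 3, (X (σ r, elt I r) : MvPolynomial (Fin 3 × Fin n) K)) =
      monomial (expv I σ) 1 := by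
  have hX : ∀ p : Fin 3 × Fin n, (X p : MvPolynomial (Fin 3 × Fin n) K)
      = monomial (Finsupp.single p 1) 1 := by
    intro p; rw [← X_pow_eq_monomial, pow_one]
  rw [expv, Fin.prod_univ_three, Fin.sum_univ_three, hX, hX, hX, monomial_mul, monomial_mul,
    one_mul, one_mul]

lemma plucker_eq (I : PV 3 n) :
    pluckerForm K I =
      ∑ σ : Equiv.Perm (Fin 3), monomial (expv I σ) (((Equiv.Perm.sign σ : ℤ) : K)) := by
  rw [pluckerForm, Matrix.det_apply]
  refine Finset.sum_congr rfl fun σ _ => ?_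
  have : (∏ r : Fin 3, Matrix.of
      (fun r c : Fin 3 => (X (r, elt I c) : MvPolynomial (Fin 3 × Fin n) K)) (σ r) r)
      = ∏ r : Fin 3, (X (σ r, elt I r) : MvPolynomial (Fin 3 × Fin n) K) := rfl
  rw [this, prod_X_eq, Units.smul_def, zsmul_eq_mul,
    ← map_intCast (C : K →+* MvPolynomial (Fin 3 × Fin n) K), C_mul_monomial, mul_one]

lemma coeff_plucker (I : PV 3 n) (τ : Equiv.Perm (Fin 3)) :
    coeff (expv I τ) (pluckerForm K I) = ((Equiv.Perm.sign τ : ℤ) : K) := by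
  rw [plucker_eq, coeff_sum, Finset.sum_eq_single τ]
  · rw [coeff_monomial, if_pos rfl]
  · intro σ _ hστ
    rw [coeff_monomial, if_neg (fun h => hστ (expv_injective I h))]
  · simp

lemma sign_cast_ne_zero (τ : Equiv.Perm (Fin 3)) : ((Equiv.Perm.sign τ : ℤ) : K) ≠ 0 := by
  rcases Int.isUnit_iff.mp (Equiv.Perm.sign τ).isUnit with h | h <;> rw [h] <;> simp

lemma support_plucker (I : PV 3 n) :
    (pluckerForm K I).support = Finset.univ.image (expv I) := by
  ext m
  simp only [MvPolynomial.mem_support_iff, Finset.mem_image, Finset.mem_univ, true_and]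
  constructor
  · intro h
    by_contra hc
    push_neg at hc
    apply h
    rw [plucker_eq, coeff_sum]
    refine Finset.sum_eq_zero fun σ _ => ?_
    rw [coeff_monomial, if_neg (fun hh => hc σ hh)]
  · rintro ⟨σ, rfl⟩
    rw [coeff_plucker]
    exact sign_cast_ne_zero σ

lemma expWt_expv (w : Fin 3 × Fin n → ℝ) (I : PV 3 n) (σ : Equiv.Perm (Fin 3)) :
    expWt w (expv I σ) = ∑ r : Fin 3, w (σ r, elt I r) := by
  have hadd : ∀ a b : (Fin 3 × Fin n) →₀ ℕ, expWt w (a + b) = expWt w a + expWt w b := by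
    intro a b
    exact Finsupp.sum_add_index' (by simp) (by intro p e1 e2; push_cast; ring)
  have hsingle : ∀ p : Fin 3 × Fin n, expWt w (Finsupp.single p 1) = w p := by
    intro p
    rw [expWt, Finsupp.sum_single_index] <;> simp
  rw [expv, Fin.sum_univ_three, hadd, hadd, hsingle, hsingle, hsingle, Fin.sum_univ_three]

lemma initialForm_plucker (w : Fin 3 × Fin n → ℝ) (I : PV 3 n) (σ0 : Equiv.Perm (Fin 3))
    (h : ∀ σ : Equiv.Perm (Fin 3), σ ≠ σ0 →
      (∑ r : Fin 3, w (σ0 r, elt I r)) < ∑ r : Fin 3, w (σ r, elt I r)) :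
    initialForm w (pluckerForm K I) =
      ((Equiv.Perm.sign σ0 : ℤ) : MvPolynomial (Fin 3 × Fin n) K) *
        ∏ r : Fin 3, X (σ0 r, elt I r) := by
  classical
  have hmin : ∀ σ : Equiv.Perm (Fin 3),
      (∑ r : Fin 3, w (σ0 r, elt I r)) ≤ ∑ r : Fin 3, w (σ r, elt I r) := by
    intro σ
    rcases eq_or_ne σ σ0 with rfl | hne
    · exact le_refl _
    · exact (h σ hne).le
  have hfilter : ((pluckerForm K I).support.filter
      (fun m => ∀ m' ∈ (pluckerForm K I).support, expWt w m ≤ expWt w m')) = {expv I σ0} := by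
    ext m
    simp only [Finset.mem_filter, Finset.mem_singleton, support_plucker (K := K),
      Finset.mem_image, Finset.mem_univ, true_and]
    constructor
    · rintro ⟨⟨σ, rfl⟩, hm⟩
      by_contra hcon
      have hne : σ ≠ σ0 := fun e => hcon (by rw [e])
      have h2 := hm (expv I σ0) ⟨σ0, rfl⟩
      rw [expWt_expv, expWt_expv] at h2
      exact absurd h2 (not_le.mpr (h σ hne))
    · rintro rfl
      refine ⟨⟨σ0, rfl⟩, ?_⟩
      rintro m' ⟨τ, rfl⟩
      rw [expWt_expv, expWt_expv]
      exact hmin τ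
  rw [initialForm]
  rw [show ((pluckerForm K I).support.filter
      (fun m => ∀ m' ∈ (pluckerForm K I).support, expWt w m ≤ expWt w m')) = {expv I σ0} from hfilter]
  rw [Finset.sum_singleton, coeff_plucker, prod_X_eq,
    ← map_intCast (C : K →+* MvPolynomial (Fin 3 × Fin n) K), C_mul_monomial, mul_one]


/-- row-1 weights -/
noncomputable def m1R (n a1 j : ℕ) : ℝ := (if j < a1 then 0 else (n : ℝ)) - j

/-- row-2 weights -/
noncomputable def m2R (n j : ℕ) : ℝ := 3 * (n : ℝ) * ((n : ℝ) - j)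

lemma m1R_lb (n a1 j : ℕ) (hj : j < n) : -(n : ℝ) < m1R n a1 j := by
  have hjn : (j : ℝ) < n := by exact_mod_cast hj
  have hn0 : (0:ℝ) ≤ n := le_trans (by positivity) hjn.le
  unfold m1R; split <;> linarith

lemma m1R_ub (n a1 j : ℕ) : m1R n a1 j ≤ n := by
  have h0 : (0:ℝ) ≤ j := by positivity
  have hn : (0:ℝ) ≤ n := by positivity
  unfold m1R; split <;> linarith

lemma case_t (n a1 : ℕ) (hn : 3 ≤ n) (x y z w : ℕ)
    (hy : y < n) (hzw : z < w) :
    m1R n a1 x + m2R n w < m1R n a1 y + m2R n z := by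
  have h1 := m1R_ub n a1 x
  have h2 := m1R_lb n a1 y hy
  have hz : (z : ℝ) + 1 ≤ w := by exact_mod_cast hzw
  have hn3 : (3:ℝ) ≤ n := by exact_mod_cast hn
  have hgap : 3 * (n:ℝ) * ((w:ℝ) - z) ≥ 3 * (n:ℝ) * 1 := by
    apply mul_le_mul_of_nonneg_left (by linarith) (by linarith)
  unfold m2R
  nlinarith

/-- exactly-one case: the row-1 weight prefers the block-1 column. -/
lemma case_s_swap (n a1 c0 c1 : ℕ) (h0 : c0 < a1) (h1 : ¬ c1 < a1) (h1n : c1 < n) :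
    m1R n a1 c0 < m1R n a1 c1 := by
  have hc0 : (0:ℝ) ≤ c0 := by positivity
  have hc1 : (c1:ℝ) + 1 ≤ n := by exact_mod_cast h1n
  unfold m1R
  rw [if_pos h0, if_neg h1]
  linarith

/-- other cases: the row-1 weight prefers the larger column. -/
lemma case_s_id (n a1 c0 c1 : ℕ) (h : c1 < a1 ∨ ¬ c0 < a1) (h01 : c0 < c1) :
    m1R n a1 c1 < m1R n a1 c0 := by
  have hc : (c0:ℝ) < c1 := by exact_mod_cast h01
  unfold m1R
  rcases h with h | h
  · rw [if_pos h, if_pos (lt_trans h01 h)]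
    linarith
  · rw [if_neg h, if_neg (fun hh => h (lt_trans h01 hh))]
    linarith

lemma weight_sum (n a1 : ℕ) (c : Fin 3 → ℕ) (τ : Equiv.Perm (Fin 3)) :
    (∑ r : Fin 3, if τ r = 0 then (0:ℝ) else if τ r = 1 then m1R n a1 (c r) else m2R n (c r))
      = m1R n a1 (c (τ⁻¹ 1)) + m2R n (c (τ⁻¹ 2)) := by
  calc (∑ r : Fin 3, if τ r = 0 then (0:ℝ) else if τ r = 1 then m1R n a1 (c r) else m2R n (c r))
      = ∑ r : Fin 3, (fun i : Fin 3 => if i = 0 then (0:ℝ) else if i = 1 then m1R n a1 (c (τ⁻¹ i))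
          else m2R n (c (τ⁻¹ i))) (τ r) := by
        refine Finset.sum_congr rfl fun r _ => ?_
        simp only [Equiv.Perm.inv_def, Equiv.symm_apply_apply]
    _ = ∑ i : Fin 3, (fun i : Fin 3 => if i = 0 then (0:ℝ) else if i = 1 then m1R n a1 (c (τ⁻¹ i))
          else m2R n (c (τ⁻¹ i))) i := by exact Equiv.sum_comp τ (fun i : Fin 3 => if i = 0 then (0:ℝ) else if i = 1 then m1R n a1 (c (τ⁻¹ i)) else m2R n (c (τ⁻¹ i)))
    _ = _ := by
        rw [Fin.sum_univ_three, if_pos rfl, if_neg (by decide : ¬(1:Fin 3)=0), if_pos rfl,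
          if_neg (by decide : ¬(2:Fin 3)=0), if_neg (by decide : ¬(2:Fin 3)=1), zero_add]

lemma perm3_ext (f g : Equiv.Perm (Fin 3)) (h1 : f 1 = g 1) (h2 : f 2 = g 2) : f = g := by
  revert h1 h2
  revert f g
  decide

end TwoBlockAux

open TwoBlockAux


/-- Every `2`-block diagonal matching field `BΛ_a` of size `3 × n` is coherent: some weight
matrix `M ∈ ℝ^{3×n}` satisfies `in_M(det X_I) = sgn(BΛ_a(I))·x_{BΛ_a(I)}` for every
`3`-subset `I ⊆ [n]`. -/
theorem twoBlock_coherent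
    (K : Type) [Field K] (n : ℕ) (hn : 3 ≤ n)
    (a1 a2 : ℕ) (ha1 : 0 < a1) (ha2 : 0 < a2) (ha : a1 + a2 = n) :
    ∃ M : Fin 3 → Fin n → ℝ, Induces K M (twoBlockMF a1 n) := by
  classical
  refine ⟨fun i j => if i = 0 then 0 else if i = 1 then m1R n a1 (j : ℕ)
    else m2R n (j : ℕ), fun I => ?_⟩
  have hc01 : ((elt I 0 : Fin n) : ℕ) < ((elt I 1 : Fin n) : ℕ) :=
    TwoBlockAux.elt_strictMono I (by decide)
  have hc12 : ((elt I 1 : Fin n) : ℕ) < ((elt I 2 : Fin n) : ℕ) :=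
    TwoBlockAux.elt_strictMono I (by decide)
  have hcn : ∀ r : Fin 3, ((elt I r : Fin n) : ℕ) < n := fun r => (elt I r).2
  have himg : Finset.image (elt I) Finset.univ = I.1 := by
    apply Finset.eq_of_subset_of_card_le
    · intro j hj
      rcases Finset.mem_image.mp hj with ⟨r, -, rfl⟩
      exact elt_mem I r
    · rw [I.2, Finset.card_image_of_injective _ (TwoBlockAux.elt_injective I),
        Finset.card_univ, Fintype.card_fin]
  have hcard : (I.1.filter (fun j : Fin n => (j : ℕ) < a1)).card
      = (if ((elt I 0 : Fin n) : ℕ) < a1 then 1 else 0)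
        + (if ((elt I 1 : Fin n) : ℕ) < a1 then 1 else 0)
        + (if ((elt I 2 : Fin n) : ℕ) < a1 then 1 else 0) := by
    rw [← himg, Finset.filter_image,
      Finset.card_image_of_injective _ (TwoBlockAux.elt_injective I),
      Finset.card_filter, Fin.sum_univ_three]
  set σ0 := twoBlockMF a1 n I with hσ0def
  have key : ∀ σ : Equiv.Perm (Fin 3), σ ≠ σ0 →
      (∑ r : Fin 3, (if σ0 r = 0 then (0:ℝ) else if σ0 r = 1 then m1R n a1 ((elt I r : Fin n) : ℕ)
        else m2R n ((elt I r : Fin n) : ℕ)))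
      < ∑ r : Fin 3, (if σ r = 0 then (0:ℝ) else if σ r = 1 then m1R n a1 ((elt I r : Fin n) : ℕ)
        else m2R n ((elt I r : Fin n) : ℕ)) := by
    intro σ hne
    have hinvne : σ⁻¹ ≠ σ0⁻¹ := fun h => hne (inv_injective h)
    rw [TwoBlockAux.weight_sum, TwoBlockAux.weight_sum]
    by_cases hone : (I.1.filter (fun j : Fin n => (j : ℕ) < a1)).card = 1
    · have hσ0v : σ0 = Equiv.swap 0 1 := by
        rw [hσ0def]; simp only [twoBlockMF, if_pos hone]
      have hb : ((elt I 0 : Fin n) : ℕ) < a1 ∧ ¬ ((elt I 1 : Fin n) : ℕ) < a1 := by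
        rw [hcard] at hone
        by_cases h0 : ((elt I 0 : Fin n) : ℕ) < a1 <;>
          by_cases h1 : ((elt I 1 : Fin n) : ℕ) < a1 <;>
          by_cases h2 : ((elt I 2 : Fin n) : ℕ) < a1 <;>
          simp [h0, h1, h2] at hone ⊢ <;> omega
      have ht0 : σ0⁻¹ 2 = 2 := by rw [hσ0v]; decide
      have hs0 : σ0⁻¹ 1 = 0 := by rw [hσ0v]; decide
      rw [ht0, hs0]
      by_cases ht : σ⁻¹ 2 = 2
      · have hsne : σ⁻¹ 1 ≠ (0 : Fin 3) := by
          intro hEq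
          exact hinvne (TwoBlockAux.perm3_ext _ _ (by rw [hEq, hs0]) (by rw [ht, ht0]))
        have hs12 : σ⁻¹ 1 ≠ (2 : Fin 3) := by
          intro h
          exact absurd (σ⁻¹.injective (h.trans ht.symm)) (by decide)
        have hs1 : σ⁻¹ 1 = 1 := by
          have hfin : ∀ x : Fin 3, x ≠ 0 → x ≠ 2 → x = 1 := by decide
          exact hfin _ hsne hs12
        rw [ht, hs1]
        exact add_lt_add_left (TwoBlockAux.case_s_swap n a1 _ _ hb.1 hb.2 (hcn 1)) _
      · have htlt : σ⁻¹ 2 < (2 : Fin 3) := by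
          have hfin : ∀ x : Fin 3, x ≠ 2 → x < 2 := by decide
          exact hfin _ ht
        have hclt : ((elt I (σ⁻¹ 2) : Fin n) : ℕ) < ((elt I 2 : Fin n) : ℕ) :=
          TwoBlockAux.elt_strictMono I htlt
        exact TwoBlockAux.case_t n a1 hn _ _ _ _ (hcn _) hclt
    · have hσ0v : σ0 = 1 := by
        rw [hσ0def]; simp only [twoBlockMF, if_neg hone]
      have hb : ((elt I 1 : Fin n) : ℕ) < a1 ∨ ¬ ((elt I 0 : Fin n) : ℕ) < a1 := by
        rw [hcard] at hone
        by_cases h0 : ((elt I 0 : Fin n) : ℕ) < a1 <;>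
          by_cases h1 : ((elt I 1 : Fin n) : ℕ) < a1 <;>
          by_cases h2 : ((elt I 2 : Fin n) : ℕ) < a1 <;>
          simp [h0, h1, h2] at hone ⊢ <;> omega
      have ht0 : σ0⁻¹ 2 = 2 := by rw [hσ0v]; decide
      have hs0 : σ0⁻¹ 1 = 1 := by rw [hσ0v]; decide
      rw [ht0, hs0]
      by_cases ht : σ⁻¹ 2 = 2
      · have hsne : σ⁻¹ 1 ≠ (1 : Fin 3) := by
          intro hEq
          exact hinvne (TwoBlockAux.perm3_ext _ _ (by rw [hEq, hs0]) (by rw [ht, ht0]))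
        have hs12 : σ⁻¹ 1 ≠ (2 : Fin 3) := by
          intro h
          exact absurd (σ⁻¹.injective (h.trans ht.symm)) (by decide)
        have hs1 : σ⁻¹ 1 = 0 := by
          have hfin : ∀ x : Fin 3, x ≠ 1 → x ≠ 2 → x = 0 := by decide
          exact hfin _ hsne hs12
        rw [ht, hs1]
        exact add_lt_add_left (TwoBlockAux.case_s_id n a1 _ _ hb hc01) _
      · have htlt : σ⁻¹ 2 < (2 : Fin 3) := by
          have hfin : ∀ x : Fin 3, x ≠ 2 → x < 2 := by decide
          exact hfin _ ht
        have hclt : ((elt I (σ⁻¹ 2) : Fin n) : ℕ) < ((elt I 2 : Fin n) : ℕ) :=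
          TwoBlockAux.elt_strictMono I htlt
        exact TwoBlockAux.case_t n a1 hn _ _ _ _ (hcn _) hclt
  have HH := TwoBlockAux.initialForm_plucker (K := K)
      (fun p : Fin 3 × Fin n => if p.1 = 0 then (0:ℝ) else if p.1 = 1 then m1R n a1 (p.2 : ℕ)
        else m2R n (p.2 : ℕ)) I σ0 key
  simp only [mfTerm, mfMon]
  exact HH
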